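/- Let Q be a bounded sublinear rate operator on ℬ, and for each t ≥ 0 let e^{tQ} denote the limit in operator seminorm of the sequence ((I + (t/n)Q)^n)_{n∈ℕ}. Then for every t ≥ 0, the sequence (n(e^{(t/n)Q} − I))_{n∈ℕ} converges in operator seminorm to tQ; that is, the operator logarithm of e^{tQ} equals tQ. -/

import Mathlib

open Filter Topology BoundedContinuousFunction ENNReal NNReal

/-- The space of (possibly nonlinear) operators on the Banach space `X →ᵇ ℝ`
of bounded (continuous, i.e. with `X` discrete: all) real-valued functions. -/
abbrev Op (X : Type*) [TopologicalSpace X] :=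
  BoundedContinuousFunction X ℝ → BoundedContinuousFunction X ℝ

/-- The operator seminorm `‖A‖ = sup {‖A f‖/‖f‖ : f ≠ 0}`, a value in `[0,∞]`. -/
noncomputable def opSemiNorm {X : Type*} [TopologicalSpace X] (A : Op X) : ℝ≥0∞ :=
  ⨆ (f : BoundedContinuousFunction X ℝ) (_ : f ≠ 0), (‖A f‖₊ : ℝ≥0∞) / (‖f‖₊ : ℝ≥0∞)

/-- The operator norm distance `d(A,B) = ‖A 0 − B 0‖∞ + ‖A − B‖`. -/
noncomputable def opDist {X : Type*} [TopologicalSpace X] (A B : Op X) : ℝ≥0∞ :=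
  (‖A 0 - B 0‖₊ : ℝ≥0∞) + opSemiNorm (A - B)

/-- Sublinear transition operator: (T1) positive homogeneity, (T2) subadditivity,
(T3) `T f ≤ sup f` pointwise. -/
def IsSublinearTransition {X : Type*} [TopologicalSpace X] (T : Op X) : Prop :=
  (∀ (c : ℝ), 0 ≤ c → ∀ f, T (c • f) = c • T f) ∧
  (∀ f g, ∀ x, T (f + g) x ≤ T f x + T g x) ∧
  (∀ f, ∀ x, T f x ≤ ⨆ y, f y)

/-- Sublinear rate operator: (Q1) positive homogeneity, (Q2) subadditivity,
(Q3) constants map to zero, (Q4) positive maximum principle. -/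
def IsSublinearRate {X : Type*} [TopologicalSpace X] (Q : Op X) : Prop :=
  (∀ (c : ℝ), 0 ≤ c → ∀ f, Q (c • f) = c • Q f) ∧
  (∀ f g, ∀ x, Q (f + g) x ≤ Q f x + Q g x) ∧
  (∀ (c : ℝ), Q (BoundedContinuousFunction.const X c) = 0) ∧
  (∀ f, ∀ x : X, (⨆ y, f y) = f x → 0 ≤ f x → Q f x ≤ 0)

/-- The Euler approximation `(I + (t/n) Q)^n` (n-fold composition). -/
noncomputable def euler {X : Type*} [TopologicalSpace X] (Q : Op X) (t : ℝ) (n : ℕ) : Op X :=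
  (fun f => f + (t / (n : ℝ)) • Q f)^[n]

/-- Uniform continuity of a semigroup `(S_t)_{t ≥ 0}`:
`‖S_s − S_t‖ → 0` as `s → t` (within `s ≥ 0`), for every `t ≥ 0`. -/
def IsUniformlyContinuousSG {X : Type*} [TopologicalSpace X] (S : ℝ → Op X) : Prop :=
  ∀ t : ℝ, 0 ≤ t →
    Tendsto (fun s => opSemiNorm (S s - S t)) (nhdsWithin t (Set.Ici 0)) (nhds 0)

/-- The indicator function `1_x` of the singleton `{x}`. -/
noncomputable def indic {X : Type*} [TopologicalSpace X] [DiscreteTopology X] (x : X) :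
    BoundedContinuousFunction X ℝ :=
  BoundedContinuousFunction.ofNormedAddCommGroup
    (Set.indicator {x} (fun _ => (1 : ℝ))) continuous_of_discreteTopology 1
    (by
      intro y
      classical
      rw [Set.indicator_apply]
      split_ifs <;> simp)

/-- Downward continuity (continuity from above) of an operator. -/
def DownwardContinuous {X : Type*} [TopologicalSpace X] (A : Op X) : Prop :=
  ∀ (f : ℕ → BoundedContinuousFunction X ℝ) (g : BoundedContinuousFunction X ℝ),
    (∀ n x, f (n + 1) x ≤ f n x) →
    (∀ x, Tendsto (fun n => f n x) atTop (nhds (g x))) →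
    ∀ x, Tendsto (fun n => A (f n) x) atTop (nhds (A g x))


/-! Sublinearity makes `Q` Lipschitz with constant `K = ‖Q‖`. For a step `s ≥ 0`, comparing the
Euler scheme `(I + (s/m)Q)^m` with the single step `I + sQ` step by step gives
`‖(I + (s/m)Q)^m − (I + sQ)‖ ≤ s² K² e^{sK}` uniformly in `m`, hence in the limit
`‖e^{sQ} − (I + sQ)‖ ≤ s² K² e^{sK}`. With `s = t/n`,
`‖n(e^{(t/n)Q} − I) − tQ‖ = n ‖e^{sQ} − (I + sQ)‖ ≤ t² K² e^{tK} / n → 0`. -/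

section EulerStep

variable {E : Type*} [SeminormedAddCommGroup E] [NormedSpace ℝ E]

def eulerStep (Q : E → E) (h : ℝ) : E → E := fun f => f + h • Q f

lemma smul_sub_eulerStep_div {c : ℝ} (hc : c ≠ 0) (S Q : E → E) (t : ℝ) :
    c • (S - eulerStep Q (t / c)) = c • (S - id) - t • Q := by
  funext f
  simp only [Pi.sub_apply, Pi.smul_apply, id, eulerStep]
  rw [smul_sub, smul_sub, smul_add, smul_smul, mul_div_cancel₀ t hc, sub_add_eq_sub_sub]

variable {Q : E → E} {K : ℝ≥0} {h : ℝ}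

lemma norm_add_smul_le_of_nonneg (hh : 0 ≤ h) (f g : E) : ‖f + h • g‖ ≤ ‖f‖ + h * ‖g‖ := by
  rw [← norm_smul_of_nonneg hh]; exact norm_add_le _ _

variable (hQ : LipschitzWith K Q) (hQ0 : Q 0 = 0) (hh : 0 ≤ h)
include hQ hQ0 hh

lemma norm_eulerStep_le (f : E) : ‖eulerStep Q h f‖ ≤ (1 + h * K) * ‖f‖ :=
  calc ‖f + h • Q f‖ ≤ ‖f‖ + h * ‖Q f‖ := norm_add_smul_le_of_nonneg hh _ _
    _ ≤ ‖f‖ + h * (K * ‖f‖) := by gcongr; exact hQ.norm_le_mul hQ0 f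
    _ = (1 + h * K) * ‖f‖ := by ring

lemma norm_iterate_eulerStep_le (k : ℕ) (f : E) :
    ‖(eulerStep Q h)^[k] f‖ ≤ (1 + h * K) ^ k * ‖f‖ := by
  induction k with
  | zero => simp
  | succ k ih =>
    rw [Function.iterate_succ_apply', pow_succ', mul_assoc]
    exact (norm_eulerStep_le hQ hQ0 hh _).trans (by gcongr)

lemma norm_iterate_eulerStep_sub_self_le (k : ℕ) (f : E) :
    ‖(eulerStep Q h)^[k] f - f‖ ≤ k * (h * K) * (1 + h * K) ^ k * ‖f‖ := by
  induction k with
  | zero => simp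
  | succ k ih =>
    set g := (eulerStep Q h)^[k] f
    have hg : ‖g‖ ≤ (1 + h * K) ^ k * ‖f‖ := norm_iterate_eulerStep_le hQ hQ0 hh k f
    have hgrow : (1 + h * K) ^ k ≤ (1 + h * K) ^ (k + 1) :=
      pow_le_pow_right₀ (le_add_of_nonneg_right (by positivity)) k.le_succ
    rw [Function.iterate_succ_apply']
    calc ‖g + h • Q g - f‖ = ‖(g - f) + h • Q g‖ := by congr 1; abel
      _ ≤ ‖g - f‖ + h * (K * ‖g‖) :=
          (norm_add_smul_le_of_nonneg hh _ _).trans (by gcongr; exact hQ.norm_le_mul hQ0 g)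
      _ ≤ k * (h * K) * (1 + h * K) ^ k * ‖f‖ + h * (K * ((1 + h * K) ^ k * ‖f‖)) := by
          gcongr
      _ = (k + 1) * (h * K) * (1 + h * K) ^ k * ‖f‖ := by ring
      _ ≤ ((k + 1 : ℕ) : ℝ) * (h * K) * (1 + h * K) ^ (k + 1) * ‖f‖ := by push_cast; gcongr

lemma norm_iterate_eulerStep_sub_le (k : ℕ) (f : E) :
    ‖(eulerStep Q h)^[k] f - (f + (k * h) • Q f)‖ ≤
      k ^ 2 * (h * K) ^ 2 * (1 + h * K) ^ k * ‖f‖ := by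
  induction k with
  | zero => simp
  | succ k ih =>
    set g := (eulerStep Q h)^[k] f
    have hg : ‖g - f‖ ≤ k * (h * K) * (1 + h * K) ^ k * ‖f‖ :=
      norm_iterate_eulerStep_sub_self_le hQ hQ0 hh k f
    have hgrow : (1 + h * K) ^ k ≤ (1 + h * K) ^ (k + 1) :=
      pow_le_pow_right₀ (le_add_of_nonneg_right (by positivity)) k.le_succ
    rw [Function.iterate_succ_apply']
    calc ‖g + h • Q g - (f + ((k + 1 : ℕ) * h) • Q f)‖
        = ‖(g - (f + (k * h) • Q f)) + h • (Q g - Q f)‖ := by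
          congr 1; push_cast; module
      _ ≤ ‖g - (f + (k * h) • Q f)‖ + h * (K * ‖g - f‖) :=
          (norm_add_smul_le_of_nonneg hh _ _).trans (by gcongr; exact hQ.norm_sub_le g f)
      _ ≤ k ^ 2 * (h * K) ^ 2 * (1 + h * K) ^ k * ‖f‖ +
            h * (K * (k * (h * K) * (1 + h * K) ^ k * ‖f‖)) := by
          gcongr
      _ = (k ^ 2 + k) * (h * K) ^ 2 * (1 + h * K) ^ k * ‖f‖ := by ring
      _ ≤ ((k + 1 : ℕ) : ℝ) ^ 2 * (h * K) ^ 2 * (1 + h * K) ^ (k + 1) * ‖f‖ := by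
          push_cast; gcongr; nlinarith

omit hh in
lemma norm_iterate_eulerStep_div_sub_le {s : ℝ} (hs : 0 ≤ s) {m : ℕ} (hm : m ≠ 0) (f : E) :
    ‖(eulerStep Q (s / m))^[m] f - eulerStep Q s f‖ ≤
      s ^ 2 * K ^ 2 * Real.exp (s * K) * ‖f‖ := by
  have hms : (m : ℝ) * (s / m) = s := by field_simp
  have hsq : (m : ℝ) ^ 2 * (s / m * K) ^ 2 = s ^ 2 * K ^ 2 := by
    rw [← mul_pow, ← mul_assoc, hms, mul_pow]
  have hexp : (1 + s / m * K) ^ m ≤ Real.exp (s * K) := by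
    have := Real.one_sub_div_pow_le_exp_neg (n := m) (t := -(s * K))
      (by linarith [show 0 ≤ s * K by positivity, (Nat.cast_nonneg m : (0 : ℝ) ≤ m)])
    rwa [neg_neg, neg_div, sub_neg_eq_add, mul_div_right_comm] at this
  have := norm_iterate_eulerStep_sub_le hQ hQ0 (by positivity : 0 ≤ s / m) m f
  rw [hms, hsq] at this
  exact this.trans (by gcongr)

end EulerStep

lemma euler_eq_iterate_eulerStep {X : Type*} [TopologicalSpace X] (Q : Op X) (t : ℝ) (n : ℕ) :
    euler Q t n = (eulerStep Q (t / n))^[n] := rfl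

section OpSemiNorm

variable {X : Type*} [TopologicalSpace X]

lemma le_opSemiNorm {A : Op X} {f : BoundedContinuousFunction X ℝ} (hf : f ≠ 0) :
    (‖A f‖₊ : ℝ≥0∞) / ‖f‖₊ ≤ opSemiNorm A :=
  le_iSup₂ (f := fun g (_ : g ≠ 0) => (‖A g‖₊ : ℝ≥0∞) / ‖g‖₊) f hf

lemma opSemiNorm_le_ofReal {A : Op X} {c : ℝ} (hc : 0 ≤ c) (h : ∀ f, ‖A f‖ ≤ c * ‖f‖) :
    opSemiNorm A ≤ ENNReal.ofReal c := by
  refine iSup₂_le fun f hf => ?_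
  rw [ENNReal.div_le_iff (by simpa using hf) ENNReal.coe_ne_top, ← enorm_eq_nnnorm,
    ← ofReal_norm, ← enorm_eq_nnnorm, ← ofReal_norm, ← ENNReal.ofReal_mul hc]
  exact ENNReal.ofReal_le_ofReal (h f)

lemma norm_apply_le_toReal_opSemiNorm_mul {A : Op X} (hA : opSemiNorm A ≠ ⊤) (hA0 : A 0 = 0)
    (f : BoundedContinuousFunction X ℝ) : ‖A f‖ ≤ (opSemiNorm A).toReal * ‖f‖ := by
  rcases eq_or_ne f 0 with rfl | hf
  · simp [hA0]
  have h := le_opSemiNorm (A := A) hf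
  rw [ENNReal.div_le_iff (by simpa using hf) ENNReal.coe_ne_top] at h
  have := ENNReal.toReal_mono (ENNReal.mul_ne_top hA ENNReal.coe_ne_top) h
  simpa using this

lemma opSemiNorm_sub_le_add (A B C : Op X) :
    opSemiNorm (A - C) ≤ opSemiNorm (A - B) + opSemiNorm (B - C) := by
  refine iSup₂_le fun f hf => ?_
  calc (‖A f - C f‖₊ : ℝ≥0∞) / ‖f‖₊
        ≤ ((‖A f - B f‖₊ + ‖B f - C f‖₊ : ℝ≥0) : ℝ≥0∞) / ‖f‖₊ := by
        gcongr; simpa only [← nndist_eq_nnnorm] using nndist_triangle _ _ _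
    _ = (‖(A - B) f‖₊ : ℝ≥0∞) / ‖f‖₊ + (‖(B - C) f‖₊ : ℝ≥0∞) / ‖f‖₊ := by
        rw [ENNReal.coe_add, ENNReal.add_div]; rfl
    _ ≤ opSemiNorm (A - B) + opSemiNorm (B - C) := by
        gcongr <;> exact le_opSemiNorm hf

lemma opSemiNorm_sub_comm (A B : Op X) : opSemiNorm (A - B) = opSemiNorm (B - A) := by
  simp only [opSemiNorm, Pi.sub_apply, ← nndist_eq_nnnorm, nndist_comm]

lemma opSemiNorm_smul (c : ℝ) (A : Op X) : opSemiNorm (c • A) = ‖c‖₊ * opSemiNorm A := by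
  simp only [opSemiNorm, Pi.smul_apply, nnnorm_smul, ENNReal.coe_mul, mul_div_assoc,
    ENNReal.mul_iSup]

lemma opSemiNorm_sub_le_of_tendsto_opDist {F : ℕ → Op X} {G A : Op X} {c : ℝ≥0∞}
    (hF : Tendsto (fun m => opDist (F m) G) atTop (𝓝 0))
    (hc : ∀ᶠ m in atTop, opSemiNorm (F m - A) ≤ c) : opSemiNorm (G - A) ≤ c := by
  refine ge_of_tendsto (by simpa using hF.add_const c) (hc.mono fun m hm => ?_)
  calc opSemiNorm (G - A) ≤ opSemiNorm (F m - G) + opSemiNorm (F m - A) := by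
        rw [opSemiNorm_sub_comm (F m)]; exact opSemiNorm_sub_le_add _ _ _
    _ ≤ opDist (F m) G + c := add_le_add (self_le_add_left _ _) hm

end OpSemiNorm

section SublinearRate

variable {X : Type*} [TopologicalSpace X] {Q : Op X}

lemma IsSublinearRate.map_zero (hQ : IsSublinearRate Q) : Q 0 = 0 := by
  simpa using hQ.1 0 le_rfl 0

lemma IsSublinearRate.lipschitzWith (hQ : IsSublinearRate Q) (hQb : opSemiNorm Q ≠ ⊤) :
    LipschitzWith (opSemiNorm Q).toNNReal Q := by
  have hbound := norm_apply_le_toReal_opSemiNorm_mul hQb hQ.map_zero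
  have hsub : ∀ f g x, Q f x - Q g x ≤ (opSemiNorm Q).toReal * ‖f - g‖ := fun f g x =>
    calc Q f x - Q g x ≤ Q (f - g) x := by
          have := hQ.2.1 (f - g) g x; rw [sub_add_cancel] at this; linarith
      _ ≤ ‖Q (f - g)‖ := (Real.le_norm_self _).trans (norm_coe_le_norm _ x)
      _ ≤ (opSemiNorm Q).toReal * ‖f - g‖ := hbound _
  refine LipschitzWith.of_dist_le_mul fun f g => ?_
  rw [dist_le (by positivity)]
  intro x
  rw [Real.dist_eq, abs_sub_le_iff, dist_eq_norm, ENNReal.coe_toNNReal_eq_toReal]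
  exact ⟨hsub f g x, norm_sub_rev f g ▸ hsub g f x⟩

end SublinearRate

lemma opSemiNorm_sub_eulerStep_le_of_tendsto {X : Type*} [TopologicalSpace X] {Q : Op X}
    {K : ℝ≥0} (hQ : LipschitzWith K Q) (hQ0 : Q 0 = 0) {s : ℝ} (hs : 0 ≤ s) {S : Op X}
    (hS : Tendsto (fun n => opDist (euler Q s n) S) atTop (𝓝 0)) :
    opSemiNorm (S - eulerStep Q s) ≤ ENNReal.ofReal (s ^ 2 * K ^ 2 * Real.exp (s * K)) := by
  refine opSemiNorm_sub_le_of_tendsto_opDist hS ?_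
  filter_upwards [eventually_ne_atTop 0] with m hm
  rw [euler_eq_iterate_eulerStep]
  exact opSemiNorm_le_ofReal (by positivity)
    (norm_iterate_eulerStep_div_sub_le hQ hQ0 hs hm)

lemma opSemiNorm_natCast_smul_sub_id_sub_le {X : Type*} [TopologicalSpace X] {Q : Op X}
    {K : ℝ≥0} (hQ : LipschitzWith K Q) (hQ0 : Q 0 = 0) {t : ℝ} (ht : 0 ≤ t)
    {n : ℕ} (hn : n ≠ 0)
    {S : Op X} (hS : Tendsto (fun m => opDist (euler Q (t / n) m) S) atTop (𝓝 0)) :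
    opSemiNorm ((n : ℝ) • (S - id) - t • Q) ≤
      ENNReal.ofReal (t ^ 2 * K ^ 2 * Real.exp (t * K) / n) := by
  have hs : 0 ≤ t / n := by positivity
  have hst : t / n ≤ t := div_le_self ht (by exact_mod_cast Nat.one_le_iff_ne_zero.2 hn)
  calc opSemiNorm ((n : ℝ) • (S - id) - t • Q)
      = n * opSemiNorm (S - eulerStep Q (t / n)) := by
        rw [← smul_sub_eulerStep_div (Nat.cast_ne_zero.2 hn), opSemiNorm_smul]; simp
    _ ≤ n * ENNReal.ofReal ((t / n) ^ 2 * K ^ 2 * Real.exp (t / n * K)) := by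
        gcongr; exact opSemiNorm_sub_eulerStep_le_of_tendsto hQ hQ0 hs hS
    _ = ENNReal.ofReal (t ^ 2 * K ^ 2 * Real.exp (t / n * K) / n) := by
        rw [← ENNReal.ofReal_natCast, ← ENNReal.ofReal_mul (by positivity)]
        congr 1; field_simp
    _ ≤ ENNReal.ofReal (t ^ 2 * K ^ 2 * Real.exp (t * K) / n) := by
        gcongr

theorem stmt_16_general {X : Type*} [TopologicalSpace X]
    (Q : Op X) (hQ : IsSublinearRate Q) (hQb : opSemiNorm Q ≠ ⊤)
    (E : ℝ → Op X)
    (hE : ∀ t : ℝ, 0 ≤ t → Tendsto (fun n => opDist (euler Q t n) (E t)) atTop (nhds 0))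
    (t : ℝ) (ht : 0 ≤ t) :
    Tendsto (fun n : ℕ => opSemiNorm ((n : ℝ) • (E (t / n) - id) - t • Q)) atTop (nhds 0) := by
  set K := (opSemiNorm Q).toNNReal
  have hlim : Tendsto (fun n : ℕ => ENNReal.ofReal (t ^ 2 * K ^ 2 * Real.exp (t * K) / n))
      atTop (𝓝 0) := by
    simpa using ENNReal.tendsto_ofReal (tendsto_const_div_atTop_nhds_zero_nat _)
  refine tendsto_of_tendsto_of_tendsto_of_le_of_le' tendsto_const_nhds hlim
    (.of_forall fun _ => bot_le) ?_
  filter_upwards [eventually_ne_atTop 0] with n hn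
  exact opSemiNorm_natCast_smul_sub_id_sub_le (hQ.lipschitzWith hQb) hQ.map_zero ht hn
    (hE _ (by positivity))

theorem stmt_16 {X : Type*} [Countable X] [TopologicalSpace X] [DiscreteTopology X]
    (Q : Op X) (hQ : IsSublinearRate Q) (hQb : opSemiNorm Q ≠ ⊤)
    (E : ℝ → Op X)
    (hE : ∀ t : ℝ, 0 ≤ t → Tendsto (fun n => opDist (euler Q t n) (E t)) atTop (nhds 0))
    (t : ℝ) (ht : 0 ≤ t) :
    Tendsto (fun n : ℕ => opSemiNorm ((n : ℝ) • (E (t / n) - id) - t • Q)) atTop (nhds 0) :=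
  stmt_16_general Q hQ hQb E hE t ht
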